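/- Let K be a number field of degree d and fix integers m ≥ k ≥ 1. There exists a constant C > 0, independent of Λ and of the indices, such that for every O_K-module lattice Λ ⊆ K_ℝ^m of O_K-rank k with successive K-minima l₁, …, l_k, and for all 1 ≤ i < j ≤ k, one has ‖π_i(l_j)‖ ≤ C·‖l_i‖, where π_i : K_ℝ^m → K_ℝ·l_i is the orthogonal projection onto the real subspace K_ℝ·l_i. -/

import Mathlib

noncomputable section
open NumberField NumberField.InfinitePlace MeasureTheory Module Submodule Matrix
attribute [local instance] Classical.propDecidable
set_option synthInstance.maxHeartbeats 1000000
set_option maxHeartbeats 1000000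

/-! Setup: the space `K_ℝ = K ⊗ ℝ`, realized as the mixed space `ℝ^{r₁} × ℂ^{r₂}`, together
with the Euclidean structure given by `‖x‖² = |Δ_K|^{-2/d}·Tr(x·x̄)`, extended coordinatewise
to vectors and matrices over `K_ℝ`. This Euclidean structure is realized through explicit
linear coordinates with values in `EuclideanSpace ℝ _`. -/

namespace Paper

variable (K : Type) [Field K] [NumberField K]

/-- The mixed space `K ⊗ ℝ ≅ ℝ^{r₁} × ℂ^{r₂}`. -/
abbrev MS : Type := NumberField.mixedEmbedding.mixedSpace K

/-- Real-coordinate index type for `K_ℝ`: one coordinate for each real place and two for each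
complex place. -/
abbrev RIx : Type := {w : InfinitePlace K // IsReal w} ⊕ ({w : InfinitePlace K // IsComplex w} × Bool)

/-- The scaling factor `|Δ_K|^{-1/d}`. -/
def sK : ℝ := (Int.natAbs (NumberField.discr K) : ℝ) ^ (-(1:ℝ) / (finrank ℚ K))

lemma sK_pos : 0 < sK K := by
  apply Real.rpow_pos_of_pos
  have := NumberField.discr_ne_zero K
  exact_mod_cast Int.natAbs_pos.mpr this

/-- Coordinates of `K_ℝ` realizing the Euclidean structure `‖x‖² = |Δ_K|^{-2/d}·Tr(x·x̄)`:
a real place `v` contributes the coordinate `|Δ_K|^{-1/d}·x_v` and a complex place `w`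
contributes the two coordinates `|Δ_K|^{-1/d}·√2·Re(x_w)` and `|Δ_K|^{-1/d}·√2·Im(x_w)`,
so that the standard Euclidean norm of the coordinates equals the norm above. -/
def eucMap : MS K ≃ₗ[ℝ] EuclideanSpace ℝ (RIx K) where
  toFun x := WithLp.toLp 2 (fun q => Sum.rec (fun v => sK K * x.1 v)
    (fun p => (sK K * Real.sqrt 2) * (if p.2 then (x.2 p.1).im else (x.2 p.1).re)) q)
  invFun y := (fun v => (sK K)⁻¹ * y (.inl v),
               fun w => ⟨(sK K * Real.sqrt 2)⁻¹ * y (.inr (w, false)),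
                         (sK K * Real.sqrt 2)⁻¹ * y (.inr (w, true))⟩)
  map_add' x y := by
    refine PiLp.ext fun q => ?_
    rcases q with v | ⟨w, b⟩
    · show sK K * (x.1 v + y.1 v) = sK K * x.1 v + sK K * y.1 v
      ring
    · show (sK K * Real.sqrt 2) * (if b then (x.2 w + y.2 w).im else (x.2 w + y.2 w).re) = _
      cases b <;> simp [Complex.add_re, Complex.add_im] <;> ring
  map_smul' c x := by
    refine PiLp.ext fun q => ?_
    rcases q with v | ⟨w, b⟩
    · show sK K * (c * x.1 v) = c * (sK K * x.1 v)
      ring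
    · show (sK K * Real.sqrt 2) * (if b then (c • x.2 w).im else (c • x.2 w).re) = _
      cases b <;> simp [Complex.smul_re, Complex.smul_im] <;> ring
  left_inv x := by
    have h1 : sK K ≠ 0 := ne_of_gt (sK_pos K)
    have h2 : sK K * Real.sqrt 2 ≠ 0 := by
      have h3 : (0:ℝ) < Real.sqrt 2 := Real.sqrt_pos.mpr (by norm_num)
      positivity
    refine Prod.ext (funext fun v => ?_) (funext fun w => ?_)
    · show (sK K)⁻¹ * (sK K * x.1 v) = x.1 v
      field_simp
    · show (⟨(sK K * Real.sqrt 2)⁻¹ * ((sK K * Real.sqrt 2) * (x.2 w).re),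
            (sK K * Real.sqrt 2)⁻¹ * ((sK K * Real.sqrt 2) * (x.2 w).im)⟩ : ℂ) = x.2 w
      apply Complex.ext <;> field_simp
  right_inv y := by
    have h1 : sK K ≠ 0 := ne_of_gt (sK_pos K)
    have h2 : sK K * Real.sqrt 2 ≠ 0 := by
      have h3 : (0:ℝ) < Real.sqrt 2 := Real.sqrt_pos.mpr (by norm_num)
      positivity
    refine PiLp.ext fun q => ?_
    rcases q with v | ⟨w, b⟩
    · show sK K * ((sK K)⁻¹ * y (.inl v)) = y (.inl v)
      field_simp
    · cases b
      · show (sK K * Real.sqrt 2) * ((sK K * Real.sqrt 2)⁻¹ * y (.inr (w, false))) = _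
        field_simp
      · show (sK K * Real.sqrt 2) * ((sK K * Real.sqrt 2)⁻¹ * y (.inr (w, true))) = _
        field_simp

/-- Euclidean coordinates for vectors in `K_ℝ^m`. -/
def eucVec (m : ℕ) : (Fin m → MS K) ≃ₗ[ℝ] EuclideanSpace ℝ (Fin m × RIx K) where
  toFun x := WithLp.toLp 2 (fun p => eucMap K (x p.1) p.2)
  invFun y := fun i => (eucMap K).symm (WithLp.toLp 2 (fun q => y (i, q)))
  map_add' x y := by
    refine PiLp.ext fun p => ?_
    show eucMap K (x p.1 + y p.1) p.2 = eucMap K (x p.1) p.2 + eucMap K (y p.1) p.2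
    rw [map_add]; rfl
  map_smul' c x := by
    refine PiLp.ext fun p => ?_
    show eucMap K (c • x p.1) p.2 = c * eucMap K (x p.1) p.2
    rw [_root_.map_smul]; rfl
  left_inv x := by
    funext i
    show (eucMap K).symm (WithLp.toLp 2 (fun q => eucMap K (x i) q)) = x i
    exact (eucMap K).symm_apply_apply (x i)
  right_inv y := by
    refine PiLp.ext fun p => ?_
    show eucMap K ((eucMap K).symm (WithLp.toLp 2 (fun q => y (p.1, q)))) p.2 = y p
    rw [(eucMap K).apply_symm_apply] <;> rfl

/-- Euclidean coordinates for matrices in `M_{n×m}(K_ℝ)`. -/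
def eucMat (n m : ℕ) :
    Matrix (Fin n) (Fin m) (MS K) ≃ₗ[ℝ] EuclideanSpace ℝ (Fin n × Fin m × RIx K) where
  toFun A := WithLp.toLp 2 (fun p => eucMap K (A p.1 p.2.1) p.2.2)
  invFun y := Matrix.of fun i j => (eucMap K).symm (WithLp.toLp 2 (fun q => y (i, j, q)))
  map_add' x y := by
    refine PiLp.ext fun p => ?_
    show eucMap K (x p.1 p.2.1 + y p.1 p.2.1) p.2.2 = _
    rw [map_add]; rfl
  map_smul' c x := by
    refine PiLp.ext fun p => ?_
    show eucMap K (c • x p.1 p.2.1) p.2.2 = c * eucMap K (x p.1 p.2.1) p.2.2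
    rw [_root_.map_smul]; rfl
  left_inv x := by
    funext i j
    show (eucMap K).symm (WithLp.toLp 2 (fun q => eucMap K (x i j) q)) = x i j
    exact (eucMap K).symm_apply_apply (x i j)
  right_inv y := by
    refine PiLp.ext fun p => ?_
    show eucMap K ((eucMap K).symm (WithLp.toLp 2 (fun q => y (p.1, p.2.1, q)))) p.2.2 = y p
    rw [(eucMap K).apply_symm_apply] <;> rfl

/-- The Euclidean norm on `K_ℝ^m` (the `l²`-norm from `‖x‖² = |Δ_K|^{-2/d}·Tr(x·x̄)`,
extended coordinatewise). -/
def vnorm {m : ℕ} (x : Fin m → MS K) : ℝ := ‖eucVec K m x‖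

/-- The Euclidean norm on `M_{n×m}(K_ℝ)`. -/
def mnorm {n m : ℕ} (A : Matrix (Fin n) (Fin m) (MS K)) : ℝ := ‖eucMat K n m A‖

/-- The embedding of `M_{n×m}(O_K)` into `M_{n×m}(K_ℝ)`. -/
def embMat {n m : ℕ} (A : Matrix (Fin n) (Fin m) (𝓞 K)) : Matrix (Fin n) (Fin m) (MS K) :=
  A.map (fun a => NumberField.mixedEmbedding K (algebraMap (𝓞 K) K a))

/-- The rank (over `K`) of a matrix with entries in `O_K`. -/
def rankOK {n m : ℕ} (A : Matrix (Fin n) (Fin m) (𝓞 K)) : ℕ :=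
  (A.map (algebraMap (𝓞 K) K)).rank

end Paper

/-! Generic notions for Euclidean spaces: oscillation, admissible functions, integration over
subspaces (with respect to the induced Lebesgue measure), covering radius and height
(covolume) of lattices. -/

namespace Paper

/-- The oscillation function `E_f(x, ε) = sup_{‖x−y‖ ≤ ε} |f(x)−f(y)|`. -/
def Ef {V : Type} [NormedAddCommGroup V] (f : V → ℝ) (x : V) (ε : ℝ) : ℝ :=
  ⨆ y : {y : V // ‖x - y‖ ≤ ε}, |f x - f (y : V)|

/-- Integral of `g` over the subspace `W ⊆ V` with respect to the Lebesgue measure induced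
on `W` by the inner product of `V` (computed in an orthonormal coordinate system of `W`). -/
def subInt {V : Type} [NormedAddCommGroup V] [InnerProductSpace ℝ V] [FiniteDimensional ℝ V]
    (W : Submodule ℝ V) (g : V → ℝ) : ℝ :=
  ∫ y : EuclideanSpace ℝ (Fin (Module.finrank ℝ W)),
    g (((stdOrthonormalBasis ℝ W).repr.symm y : W) : V)

/-- A function on a Euclidean space is admissible with constant `Cf` if it is compactly
supported, measurable, and for every `ε > 0` and every nonzero real subspace `W`, the
integral of its oscillation `E_f(·, ε)` over `W` is at most `Cf·ε`. -/
def IsAdmissible {V : Type} [NormedAddCommGroup V] [InnerProductSpace ℝ V]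
    [FiniteDimensional ℝ V] [MeasurableSpace V] [BorelSpace V] (f : V → ℝ) (Cf : ℝ) : Prop :=
  HasCompactSupport f ∧ Measurable f ∧ 0 < Cf ∧
    ∀ ε : ℝ, 0 < ε → ∀ W : Submodule ℝ V, W ≠ ⊥ →
      subInt W (fun x => Ef f x ε) ≤ Cf * ε

/-- The covering radius of a subset `S` of a normed space:
`ρ(S) = sup_{x ∈ span ℝ S} inf_{v ∈ S} ‖x−v‖`. -/
def covRadV {V : Type} [NormedAddCommGroup V] [Module ℝ V] (S : Set V) : ℝ :=
  ⨆ x : Submodule.span ℝ S, ⨅ v : S, ‖(x : V) - (v : V)‖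

/-- The height `H(L) = vol((L⊗ℝ)/L)` of a `ℤ`-submodule `L` of a Euclidean space, computed as
the covolume of the image of `L` in an orthonormal coordinate system of `span ℝ L`. -/
def hgtV {V : Type} [NormedAddCommGroup V] [InnerProductSpace ℝ V] [FiniteDimensional ℝ V]
    (L : Submodule ℤ V) : ℝ :=
  ZLattice.covolume
    ((L.comap (((Submodule.span ℝ (L : Set V)).subtype).restrictScalars ℤ)).map
      (((stdOrthonormalBasis ℝ (Submodule.span ℝ (L : Set V))).repr.toLinearEquiv.restrictScalars
        ℤ).toLinearMap)) MeasureTheory.volume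

end Paper

/-! `O_K`-module lattices in `K_ℝ^m` and their successive `K`-minima. -/

namespace Paper

variable (K : Type) [Field K] [NumberField K]

/-- The action of an algebraic integer on a vector of `K_ℝ^m` (coordinatewise
multiplication through the mixed embedding). -/
def okSmul {m : ℕ} (a : NumberField.RingOfIntegers K) (x : Fin m → MS K) : Fin m → MS K :=
  fun t => NumberField.mixedEmbedding K (algebraMap (NumberField.RingOfIntegers K) K a) * x t

/-- An `O_K`-module lattice in `K_ℝ^m`: a discrete additive subgroup stable under the
`O_K`-action. -/
def IsOKModuleLattice {m : ℕ} (Λ : Set (Fin m → MS K)) : Prop :=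
  (0 : Fin m → MS K) ∈ Λ ∧ (∀ x ∈ Λ, ∀ y ∈ Λ, x + y ∈ Λ) ∧ (∀ x ∈ Λ, -x ∈ Λ) ∧
  (∀ a : NumberField.RingOfIntegers K, ∀ x ∈ Λ, okSmul K a x ∈ Λ) ∧
  (∃ ε : ℝ, 0 < ε ∧ ∀ x ∈ Λ, vnorm K x < ε → x = 0)

/-- The subset `K·l₁ + ⋯ + K·l_i ⊆ K_ℝ^m` (`K`-span of the first `i` vectors). -/
def KSpanUpTo {m k : ℕ} (l : Fin k → (Fin m → MS K)) (i : ℕ) : Set (Fin m → MS K) :=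
  {x | ∃ c : Fin k → K, x = fun t =>
    ∑ j ∈ Finset.univ.filter (fun j : Fin k => (j : ℕ) < i),
      NumberField.mixedEmbedding K (c j) * l j t}

/-- `l₁, …, l_k` is a system of successive `K`-minima of `Λ`: each `l_i` belongs to `Λ`,
lies outside `K·l₁ + ⋯ + K·l_{i-1}`, and has minimal norm among such lattice vectors. -/
def IsSuccKMinima {m k : ℕ} (Λ : Set (Fin m → MS K)) (l : Fin k → (Fin m → MS K)) : Prop :=
  ∀ i : Fin k, l i ∈ Λ ∧ l i ∉ KSpanUpTo K l (i : ℕ) ∧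
    ∀ v ∈ Λ, v ∉ KSpanUpTo K l (i : ℕ) → vnorm K (l i) ≤ vnorm K v

/-- The real subspace `K_ℝ·v` of the Euclidean model of `K_ℝ^m`. -/
def lineR {m : ℕ} (v : Fin m → MS K) : Submodule ℝ (EuclideanSpace ℝ (Fin m × RIx K)) :=
  Submodule.span ℝ ((eucVec K m) '' {x | ∃ a : MS K, x = fun t => a * v t})

end Paper

/-!
STATEMENT 11: Let K be a number field of degree d and fix integers m ≥ k ≥ 1. There exists
a constant C > 0, independent of Λ and of the indices, such that for every O_K-module
lattice Λ ⊆ K_ℝ^m of O_K-rank k with successive K-minima l₁, …, l_k, and for all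
1 ≤ i < j ≤ k, one has ‖π_i(l_j)‖ ≤ C·‖l_i‖, where π_i : K_ℝ^m → K_ℝ·l_i is the orthogonal
projection onto the real subspace K_ℝ·l_i.
-/

open Paper NumberField
/-! Write `π_i(l_j) = a·l_i` with `a ∈ K_ℝ` and choose `b ∈ O_K` with `‖a - b‖` at most the
covering radius of `O_K` in `K_ℝ`. The vector `l_j - b·l_i` lies in `Λ` and outside
`K·l₁ + ⋯ + K·l_{j-1}`, so `‖l_j‖ ≤ ‖l_j - b·l_i‖`; since `b·l_i ∈ K_ℝ·l_i`, Pythagoras turns this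
into `‖π_i(l_j)‖ ≤ ‖(a - b)·l_i‖`, which is bounded by a multiple of `‖l_i‖` because
multiplication `K_ℝ × K_ℝ^m → K_ℝ^m` is a bounded bilinear map. -/

section BoundedBilinear

variable {𝕜 E F G : Type*} [NontriviallyNormedField 𝕜] [CompleteSpace 𝕜]
  [NormedAddCommGroup E] [NormedSpace 𝕜 E] [FiniteDimensional 𝕜 E]
  [NormedAddCommGroup F] [NormedSpace 𝕜 F] [FiniteDimensional 𝕜 F]
  [NormedAddCommGroup G] [NormedSpace 𝕜 G]

theorem LinearMap.exists_bound_of_finiteDimensional₂ (f : E →ₗ[𝕜] F →ₗ[𝕜] G) :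
    ∃ B, 0 ≤ B ∧ ∀ x y, ‖f x y‖ ≤ B * ‖x‖ * ‖y‖ :=
  let g : E →L[𝕜] F →L[𝕜] G :=
    LinearMap.toContinuousLinearMap (LinearMap.toContinuousLinearMap.toLinearMap ∘ₗ f)
  ⟨‖g‖, norm_nonneg g, g.le_opNorm₂⟩

end BoundedBilinear

theorem Submodule.norm_starProjection_le_norm_starProjection_sub {𝕜 E : Type*} [RCLike 𝕜]
    [NormedAddCommGroup E] [InnerProductSpace 𝕜 E] (W : Submodule 𝕜 E)
    [W.HasOrthogonalProjection] {u w : E} (hw : w ∈ W) (h : ‖u‖ ≤ ‖u - w‖) :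
    ‖W.starProjection u‖ ≤ ‖W.starProjection u - w‖ := by
  have hu := norm_sq_eq_add_norm_sq_starProjection u W
  have huw := norm_sq_eq_add_norm_sq_starProjection (u - w) W
  rw [starProjection_orthogonal_val] at hu huw
  rw [map_sub, W.starProjection_eq_self_iff.2 hw, sub_sub_sub_cancel_right] at huw
  have := pow_le_pow_left₀ (norm_nonneg _) h 2
  exact le_of_sq_le_sq (by linarith) (norm_nonneg _)

namespace Paper

variable (K : Type) [Field K]

theorem sub_notMem_KSpanUpTo {m k : ℕ} {l : Fin k → Fin m → MS K} {n : ℕ}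
    {x : Fin m → MS K} (hx : x ∉ KSpanUpTo K l n) (c : K) {i : Fin k} (hi : (i : ℕ) < n) :
    x - mixedEmbedding K c • l i ∉ KSpanUpTo K l n := by
  rintro ⟨d, hd⟩
  refine hx ⟨d + Pi.single i c, funext fun t => ?_⟩
  have hsingle : ∑ j ∈ Finset.univ.filter (fun j : Fin k => (j : ℕ) < n),
      mixedEmbedding K ((Pi.single i c : Fin k → K) j) * l j t = mixedEmbedding K c * l i t := by
    rw [Finset.sum_eq_single_of_mem i (by simpa using hi) fun j _ hj => by simp [hj],
      Pi.single_eq_same]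
  simp only [Pi.add_apply, map_add, add_mul, Finset.sum_add_distrib, hsingle, ← congrFun hd t,
    Pi.sub_apply, Pi.smul_apply, smul_eq_mul, sub_add_cancel]

variable [NumberField K]

theorem exists_norm_sub_mixedEmbedding_le :
    ∃ ρ : ℝ, 0 ≤ ρ ∧ ∀ a : MS K, ∃ b : 𝓞 K,
      ‖a - mixedEmbedding K (algebraMap (𝓞 K) K b)‖ ≤ ρ := by
  set β := mixedEmbedding.latticeBasis K
  refine ⟨∑ i, ‖β i‖, by positivity, fun a => ?_⟩
  obtain ⟨b, hb⟩ := (mixedEmbedding.mem_span_latticeBasis K).1 (ZSpan.floor β a).2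
  have hfloor : mixedEmbedding K (algebraMap (𝓞 K) K b) = ZSpan.floor β a := hb
  exact ⟨b, hfloor ▸ ZSpan.norm_fract_le β a⟩

def smulEuc (m : ℕ) : MS K →ₗ[ℝ] EuclideanSpace ℝ (Fin m × RIx K) →ₗ[ℝ]
    EuclideanSpace ℝ (Fin m × RIx K) :=
  LinearMap.mk₂ ℝ (fun c z => eucVec K m (c • (eucVec K m).symm z))
    (fun c₁ c₂ z => by rw [add_smul, map_add])
    (fun r c z => by rw [smul_assoc, map_smul])
    (fun c z₁ z₂ => by rw [map_add, smul_add, map_add])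
    (fun r c z => by rw [(eucVec K m).symm.map_smul, smul_comm, (eucVec K m).map_smul])

theorem exists_vnorm_smul_le (m : ℕ) :
    ∃ B : ℝ, 0 ≤ B ∧ ∀ (c : MS K) (x : Fin m → MS K), vnorm K (c • x) ≤ B * ‖c‖ * vnorm K x := by
  obtain ⟨B, hB, h⟩ := (smulEuc K m).exists_bound_of_finiteDimensional₂
  refine ⟨B, hB, fun c x => ?_⟩
  simpa [smulEuc, vnorm] using h c (eucVec K m x)

theorem mem_lineR_iff {m : ℕ} (v : Fin m → MS K) {y : EuclideanSpace ℝ (Fin m × RIx K)} :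
    y ∈ lineR K v ↔ ∃ a : MS K, eucVec K m (a • v) = y := by
  let f := (eucVec K m).toLinearMap ∘ₗ (LinearMap.toSpanSingleton (MS K) _ v).restrictScalars ℝ
  have hrange : lineR K v = LinearMap.range f := by
    refine le_antisymm (Submodule.span_le.2 ?_) ?_
    · rintro _ ⟨_, ⟨a, rfl⟩, rfl⟩
      exact ⟨a, rfl⟩
    · rintro _ ⟨a, rfl⟩
      exact Submodule.subset_span ⟨_, ⟨a, rfl⟩, rfl⟩
  rw [hrange]
  rfl

variable {K}

theorem IsOKModuleLattice.sub_okSmul_mem {m : ℕ} {Λ : Set (Fin m → MS K)}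
    (hΛ : IsOKModuleLattice K Λ) {x y : Fin m → MS K} (hx : x ∈ Λ) (hy : y ∈ Λ) (b : 𝓞 K) :
    x - okSmul K b y ∈ Λ := by
  obtain ⟨-, hadd, hneg, hsmul, -⟩ := hΛ
  simpa only [sub_eq_add_neg] using hadd x hx _ (hneg _ (hsmul b y hy))

theorem IsSuccKMinima.vnorm_le_vnorm_sub_okSmul {m k : ℕ} {Λ : Set (Fin m → MS K)}
    {l : Fin k → Fin m → MS K} (hl : IsSuccKMinima K Λ l) (hΛ : IsOKModuleLattice K Λ)
    {i j : Fin k} (hij : i < j) (b : 𝓞 K) :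
    vnorm K (l j) ≤ vnorm K (l j - okSmul K b (l i)) :=
  (hl j).2.2 _ (hΛ.sub_okSmul_mem (hl j).1 (hl i).1 b) (sub_notMem_KSpanUpTo K (hl j).2.1 _ hij)

end Paper

open Paper NumberField

theorem projection_of_minima_bound_general (K : Type) [Field K] [NumberField K]
    (m k : ℕ) :
    ∃ C : ℝ, 0 < C ∧
      ∀ Λ : Set (Fin m → MS K), IsOKModuleLattice K Λ →
        -- `Λ` has `O_K`-rank `k`
        Module.finrank ℝ (Submodule.span ℝ Λ) = k * Module.finrank ℚ K →
        ∀ l : Fin k → (Fin m → MS K), IsSuccKMinima K Λ l →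
          ∀ i j : Fin k, i < j →
            ‖orthogonalProjection (lineR K (l i)) (eucVec K m (l j))‖
              ≤ C * vnorm K (l i) := by
  obtain ⟨ρ, hρ, hnear⟩ := exists_norm_sub_mixedEmbedding_le K
  obtain ⟨B, hB, hsmul⟩ := exists_vnorm_smul_le K m
  refine ⟨B * ρ + 1, by positivity, fun Λ hΛ _ l hl i j hij => ?_⟩
  set W := lineR K (l i)
  set u := eucVec K m (l j)
  obtain ⟨a, ha⟩ := (mem_lineR_iff K (l i)).1 (W.orthogonalProjectionOnto u).2
  obtain ⟨b, hb⟩ := hnear a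
  set e := mixedEmbedding K (algebraMap (𝓞 K) K b)
  have hw : eucVec K m (e • l i) ∈ W := (mem_lineR_iff K (l i)).2 ⟨e, rfl⟩
  have hmin : ‖u‖ ≤ ‖u - eucVec K m (e • l i)‖ := by
    have h := hl.vnorm_le_vnorm_sub_okSmul hΛ hij b
    rwa [vnorm, vnorm, map_sub] at h
  calc ‖W.starProjection u‖
      ≤ ‖W.starProjection u - eucVec K m (e • l i)‖ :=
        W.norm_starProjection_le_norm_starProjection_sub hw hmin
    _ = vnorm K ((a - e) • l i) := by
        rw [Submodule.starProjection_apply, ← ha, vnorm, sub_smul, map_sub]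
    _ ≤ B * ‖a - e‖ * vnorm K (l i) := hsmul _ _
    _ ≤ (B * ρ + 1) * vnorm K (l i) := by
        have := norm_nonneg (eucVec K m (l i))
        gcongr
        linarith [mul_le_mul_of_nonneg_left hb hB]

theorem projection_of_minima_bound (K : Type) [Field K] [NumberField K]
    (m k : ℕ) (hk : 1 ≤ k) (hkm : k ≤ m) :
    ∃ C : ℝ, 0 < C ∧
      ∀ Λ : Set (Fin m → MS K), IsOKModuleLattice K Λ →
        -- `Λ` has `O_K`-rank `k`
        Module.finrank ℝ (Submodule.span ℝ Λ) = k * Module.finrank ℚ K →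
        ∀ l : Fin k → (Fin m → MS K), IsSuccKMinima K Λ l →
          ∀ i j : Fin k, i < j →
            ‖orthogonalProjection (lineR K (l i)) (eucVec K m (l j))‖
              ≤ C * vnorm K (l i) :=
  projection_of_minima_bound_general K m k
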